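/- arXiv:2109.12140 — 4 statements merged into one kernel-verified Lean document; each statement's English description precedes it below -/
import Mathlib

section
/- For every finite family ℐ of open intervals of the real line, the maximum size of a subfamily of pairwise disjoint intervals equals the minimum number k such that ℐ can be partitioned into k subfamilies each consisting of pairwise intersecting intervals. (Equivalently, α(G) = ϑ(G) for every finite interval graph G.) -/
/-- Two open real intervals, given by their endpoint pairs, intersect
(share a point). -/
def rMeets (p q : ℝ × ℝ) : Prop :=
  (Set.Ioo p.1 p.2 ∩ Set.Ioo q.1 q.2).Nonempty

lemma rMeets_pigeonhole {I T : Finset (ℝ × ℝ)} (hT : T ⊆ I)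
    (hp : (T : Set (ℝ × ℝ)).Pairwise fun a b => ¬ rMeets a b) {m : ℕ}
    (f : I → Fin m) (hf : ∀ a b : I, f a = f b → rMeets a b) : T.card ≤ m := by
  have hinj : Function.Injective (fun t : T => f ⟨t.1, hT t.2⟩) := by
    intro a b h
    by_contra hne
    have hne' : a.1 ≠ b.1 := fun h' => hne (Subtype.ext h')
    exact hp a.2 b.2 hne' (hf _ _ h)
  calc T.card = Fintype.card T := (Fintype.card_coe T).symm
    _ ≤ Fintype.card (Fin m) := Fintype.card_le_of_injective _ hinj
    _ = m := Fintype.card_fin m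

lemma rMeets_key : ∀ (n : ℕ) (I : Finset (ℝ × ℝ)), I.card ≤ n →
    (∀ p ∈ I, p.1 < p.2) →
    ∃ (k : ℕ) (T : Finset (ℝ × ℝ)) (x : Fin k → ℝ), T ⊆ I ∧ T.card = k ∧
      ((T : Set (ℝ × ℝ)).Pairwise fun a b => ¬ rMeets a b) ∧
      ∀ p ∈ I, ∃ i, x i ∈ Set.Ioo p.1 p.2 := by
  intro n
  induction n with
  | zero =>
    intro I hc _
    have : I = ∅ := Finset.card_eq_zero.1 (Nat.le_zero.1 hc)
    subst this
    exact ⟨0, ∅, Fin.elim0, by simp⟩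
  | succ n ih =>
    intro I hc hI
    rcases I.eq_empty_or_nonempty with rfl | hne
    · exact ⟨0, ∅, Fin.elim0, by simp⟩
    obtain ⟨p0, hp0I, hp0min⟩ := I.exists_min_image Prod.snd hne
    set r := p0.2 with hr
    set S := I.filter (fun q => q.1 < r) with hS
    have hp0S : p0 ∈ S := Finset.mem_filter.2 ⟨hp0I, hI p0 hp0I⟩
    obtain ⟨q0, hq0S, hq0max⟩ := S.exists_max_image Prod.fst ⟨p0, hp0S⟩
    have hq0r : q0.1 < r := (Finset.mem_filter.1 hq0S).2
    set x0 := (q0.1 + r) / 2 with hx0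
    set I' := I.filter (fun q => ¬ q.1 < r) with hI'def
    have hI'sub : I' ⊆ I := Finset.filter_subset _ _
    have hp0I' : p0 ∉ I' := fun h => (Finset.mem_filter.1 h).2 (hI p0 hp0I)
    have hcard' : I'.card ≤ n := by
      have : I'.card < I.card :=
        Finset.card_lt_card ⟨hI'sub, fun h => hp0I' (h hp0I)⟩
      omega
    obtain ⟨k, T, x, hTI', hTcard, hTpair, hpierce⟩ :=
      ih I' hcard' (fun p hp => hI p (hI'sub hp))
    have hp0T : p0 ∉ T := fun h => hp0I' (hTI' h)
    refine ⟨k + 1, insert p0 T, Fin.cons x0 x, ?_, ?_, ?_, ?_⟩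
    · exact Finset.insert_subset hp0I (hTI'.trans hI'sub)
    · rw [Finset.card_insert_of_notMem hp0T, hTcard]
    · rw [Finset.coe_insert]
      refine hTpair.insert ?_
      intro q hqT _
      have hq : ¬ q.1 < r := (Finset.mem_filter.1 (hTI' hqT)).2
      constructor
      · rintro ⟨y, ⟨⟨_, hy2⟩, ⟨hy3, _⟩⟩⟩
        exact hq (hy3.trans hy2)
      · rintro ⟨y, ⟨⟨hy3, _⟩, ⟨_, hy2⟩⟩⟩
        exact hq (hy3.trans hy2)
    · intro p hp
      by_cases h : p.1 < r
      · refine ⟨0, ?_⟩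
        have hpm : p.1 ≤ q0.1 := hq0max p (Finset.mem_filter.2 ⟨hp, h⟩)
        have hpr : r ≤ p.2 := hp0min p hp
        simp only [Fin.cons_zero]
        constructor
        · have : q0.1 < x0 := by rw [hx0]; linarith
          linarith
        · have : x0 < r := by rw [hx0]; linarith
          linarith
      · obtain ⟨i, hi⟩ := hpierce p (Finset.mem_filter.2 ⟨hp, h⟩)
        exact ⟨i.succ, by rw [Fin.cons_succ]; exact hi⟩

/-- For every finite family `I` of open intervals of the real line, the maximum
size of a subfamily of pairwise disjoint intervals equals the minimum number `k`
such that `I` can be partitioned into `k` subfamilies each consisting of pairwise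
intersecting intervals. -/
theorem max_disjoint_eq_min_clique_partition
    (I : Finset (ℝ × ℝ)) (hI : ∀ p ∈ I, p.1 < p.2) :
    sSup {k : ℕ | ∃ T ⊆ I, T.card = k ∧
        ((T : Set (ℝ × ℝ)).Pairwise fun a b => ¬ rMeets a b)} =
    sInf {k : ℕ | ∃ f : I → Fin k, ∀ a b : I, f a = f b → rMeets a b} := by
  obtain ⟨k, T, x, hTI, hTcard, hTpair, hpierce⟩ := rMeets_key I.card I le_rfl hI
  set L := {k : ℕ | ∃ T ⊆ I, T.card = k ∧
      ((T : Set (ℝ × ℝ)).Pairwise fun a b => ¬ rMeets a b)} with hL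
  set R := {k : ℕ | ∃ f : I → Fin k, ∀ a b : I, f a = f b → rMeets a b} with hR
  have hkL : k ∈ L := ⟨T, hTI, hTcard, hTpair⟩
  have hkR : k ∈ R := by
    refine ⟨fun p => Classical.choose (hpierce p.1 p.2), ?_⟩
    intro a b hab
    have ha := Classical.choose_spec (hpierce a.1 a.2)
    have hb := Classical.choose_spec (hpierce b.1 b.2)
    have hab' : Classical.choose (hpierce a.1 a.2) = Classical.choose (hpierce b.1 b.2) := hab
    rw [← hab'] at hb
    exact ⟨_, ha, hb⟩
  have hLR : ∀ l ∈ L, ∀ m ∈ R, l ≤ m := by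
    rintro l ⟨T', hT'I, hT'card, hT'pair⟩ m ⟨f, hf⟩
    rw [← hT'card]
    exact rMeets_pigeonhole hT'I hT'pair f hf
  have h1 : sSup L = k := by
    apply le_antisymm
    · exact csSup_le ⟨k, hkL⟩ (fun l hl => hLR l hl k hkR)
    · exact le_csSup ⟨k, fun l hl => hLR l hl k hkR⟩ hkL
  have h2 : sInf R = k := by
    apply le_antisymm
    · exact csInf_le (OrderBot.bddBelow R) hkR
    · exact le_csInf ⟨k, hkR⟩ (fun m hm => hLR k hkL m hm)
  rw [h1, h2]
end

section
/- Let (𝒫,𝒬) be a good 2-partition of a vertebrate family 𝒥, let 0 ≤ l < r ≤ m be such that every backbone unit interval contained in (l,r) belongs to 𝒫, and let I ∈ 𝒬 with I ⊆ (l,r) and length of I at most v. Then (𝒫 ∪ {I}, 𝒬 ∖ {I}) is again a good 2-partition of 𝒥. -/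
/-- The open real interval corresponding to an integer pair `(a, b)`. -/
def iv (p : ℤ × ℤ) : Set ℝ := Set.Ioo (p.1 : ℝ) (p.2 : ℝ)

/-- Two integer-endpoint open intervals intersect (share a point). -/
def Meets (p q : ℤ × ℤ) : Prop := (iv p ∩ iv q).Nonempty

/-- A vertebrate family: distinct open intervals with integer endpoints contained in
`[0, m]`, containing the `m` unit intervals `(i-1, i)` for `1 ≤ i ≤ m`. -/
def Vertebrate (m : ℤ) (J : Finset (ℤ × ℤ)) : Prop :=
  (∀ p ∈ J, 0 ≤ p.1 ∧ p.1 < p.2 ∧ p.2 ≤ m) ∧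
  (∀ i : ℤ, 1 ≤ i → i ≤ m → ((i - 1, i) : ℤ × ℤ) ∈ J)

/-- `Bar v R S` (written `ℛ∣𝒮`): every interval in `R` intersects at most `v`
pairwise disjoint intervals of `S` other than itself. -/
def Bar (v : ℕ) (R S : Finset (ℤ × ℤ)) : Prop :=
  ∀ p ∈ R, ∀ T ⊆ S.erase p,
    ((T : Set (ℤ × ℤ)).Pairwise fun a b => ¬ Meets a b) →
    (∀ q ∈ T, Meets p q) → T.card ≤ v

/-- An (ordered) 2-partition of a family `S`. -/
def TwoPartition (P Q S : Finset (ℤ × ℤ)) : Prop := P ∪ Q = S ∧ Disjoint P Q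

/-- A good 2-partition: each part satisfies `𝒮∣𝒮`. -/
def GoodPartition (v : ℕ) (P Q S : Finset (ℤ × ℤ)) : Prop :=
  TwoPartition P Q S ∧ Bar v P P ∧ Bar v Q Q

/-- `Jsub S l r` = the subfamily of intervals of `S` contained in `(l, r)`. -/
def Jsub (S : Finset (ℤ × ℤ)) (l r : ℤ) : Finset (ℤ × ℤ) :=
  S.filter fun p => l ≤ p.1 ∧ p.2 ≤ r

/-- The subfamily of intervals of length at most `v`. -/
def Jle (v : ℕ) (S : Finset (ℤ × ℤ)) : Finset (ℤ × ℤ) := S.filter fun p => p.2 - p.1 ≤ (v : ℤ)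

/-- The subfamily of intervals of length greater than `v`. -/
def Jgt (v : ℕ) (S : Finset (ℤ × ℤ)) : Finset (ℤ × ℤ) := S.filter fun p => (v : ℤ) < p.2 - p.1

/-- `Ksub S s` = the subfamily of intervals `(a, b) ∈ S` with `a < s < b`. -/
def Ksub (S : Finset (ℤ × ℤ)) (s : ℤ) : Finset (ℤ × ℤ) := S.filter fun p => p.1 < s ∧ s < p.2

/-- `alphaF S l r` = maximum size of a subfamily of pairwise disjoint intervals of `S`
each of which intersects the interval `(l, r)`. -/
noncomputable def alphaF (S : Finset (ℤ × ℤ)) (l r : ℤ) : ℕ :=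
  sSup {k : ℕ | ∃ T ⊆ S, T.card = k ∧
    ((T : Set (ℤ × ℤ)).Pairwise fun a b => ¬ Meets a b) ∧ ∀ p ∈ T, Meets p (l, r)}

/-- `idx v R u s` = the maximum `i ∈ [0, s]` such that `u ≤ alphaF R i s ≤ v + 1`,
or `-1` if no such index exists. -/
noncomputable def idx (v : ℕ) (R : Finset (ℤ × ℤ)) (u : ℕ) (s : ℤ) : ℤ :=
  sSup (insert (-1) {i : ℤ | 0 ≤ i ∧ i ≤ s ∧ u ≤ alphaF R i s ∧ alphaF R i s ≤ v + 1})

/-- An `s`-monotonic sequence `r = ⟨r_0, …, r_{v+2}⟩`. -/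
def SMonotonic (v : ℕ) (s : ℤ) (r : ℕ → ℤ) : Prop :=
  r 0 = s ∧ r (v + 2) = -1 ∧ (∀ u ≤ v + 1, r (u + 1) ≤ r u) ∧
  ∀ u ≤ v + 1, (r (u + 1) = -1 ∧ r u = -1) ∨ r (u + 1) < r u

/-- An `s`-monotonic sequence `r` encodes `R ⊆ 𝒥(0,s)` if `r_u = i(R, u, s)` for all `u`. -/
def Encodes (v : ℕ) (r : ℕ → ℤ) (R : Finset (ℤ × ℤ)) (s : ℤ) : Prop :=
  ∀ u ≤ v + 2, r u = idx v R u s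

/-- `alphaSeq v r i` = the maximum `u ∈ [0, v+1]` with `i ≤ r u`. -/
noncomputable def alphaSeq (v : ℕ) (r : ℕ → ℤ) (i : ℤ) : ℕ :=
  sSup {u : ℕ | u ≤ v + 1 ∧ i ≤ r u}

/-- `(l, r)` is a vertebrate range for the 2-partition `(P, Q)` of `𝒥(0,s)`:
all backbone unit intervals contained in `(l, r)` lie in the same part. -/
def VertRange (P Q : Finset (ℤ × ℤ)) (s l r : ℤ) : Prop :=
  0 ≤ l ∧ l < r ∧ r ≤ s ∧
  ((∀ i : ℤ, l < i → i ≤ r → ((i - 1, i) : ℤ × ℤ) ∈ P) ∨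
   (∀ i : ℤ, l < i → i ≤ r → ((i - 1, i) : ℤ × ℤ) ∈ Q))

/-- A maximal vertebrate range. -/
def MaxVertRange (P Q : Finset (ℤ × ℤ)) (s l r : ℤ) : Prop :=
  VertRange P Q s l r ∧
  ∀ l' r', VertRange P Q s l' r' → l' ≤ l → r ≤ r' → l' = l ∧ r' = r

/-- A 2-partition `(P, Q)` of `𝒥(0,s)` is basic if for every maximal vertebrate range
`(l, r)` its induced 2-partition of `𝒥(l,r)` is `(𝒥_≤(l,r), 𝒥_>(l,r))` or the swap. -/
def Basic (v : ℕ) (J P Q : Finset (ℤ × ℤ)) (s : ℤ) : Prop :=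
  ∀ l r : ℤ, MaxVertRange P Q s l r →
    (P ∩ Jsub J l r = Jle v (Jsub J l r) ∧ Q ∩ Jsub J l r = Jgt v (Jsub J l r)) ∨
    (P ∩ Jsub J l r = Jgt v (Jsub J l r) ∧ Q ∩ Jsub J l r = Jle v (Jsub J l r))

/-- `(p, q)` (a pair of `s`-monotonic sequences) extends `(p', q')` (a pair of
`s'`-monotonic sequences) by the 2-partition `(E, F)` of `𝒦_{s'} ∖ 𝒦_s`. -/
def ExtendsBy (v : ℕ) (J : Finset (ℤ × ℤ)) (s' s : ℤ) (p q p' q' : ℕ → ℤ)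
    (E F : Finset (ℤ × ℤ)) : Prop :=
  let D := Jgt v (Jsub J s' s)
  let w := alphaF D s' s
  let w' := alphaF (F ∪ D) s' s
  let d := (s - s').toNat
  (∀ u : ℕ, 1 ≤ u → u ≤ min d (v + 1) → p u = s - (u : ℤ)) ∧
  (∀ u : ℕ, d < u → u ≤ v + 1 → p u = p' (u - d)) ∧
  (∀ u : ℕ, 1 ≤ u → u ≤ min w' (v + 1) → q u = idx v (F ∪ D) u s) ∧
  (∀ u : ℕ, w' < u → u ≤ v + 1 → q u = q' (u - w))

/-- The dynamic-programming predicate `Y(s, p, q, 𝒜, ℬ)`. -/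
def Ypred (v : ℕ) (J : Finset (ℤ × ℤ)) (s : ℤ) (p q : ℕ → ℤ)
    (A B : Finset (ℤ × ℤ)) : Prop :=
  ∃ P Q : Finset (ℤ × ℤ), TwoPartition P Q (Jsub J 0 s) ∧
    Bar v P P ∧ Bar v Q Q ∧ Basic v J P Q s ∧
    Encodes v p P s ∧ Encodes v q Q s ∧
    Bar v P (P ∪ A) ∧ Bar v Q (Q ∪ B) ∧
    (0 < s → ((s - 1, s) : ℤ × ℤ) ∈ P)

/-- Two intervals overlap significantly: their intersection has length at least `2v+1`. -/
def SigOverlap (v : ℕ) (p q : ℤ × ℤ) : Prop :=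
  (2 * (v : ℤ) + 1) ≤ min p.2 q.2 - max p.1 q.1

/-- The significant-overlap graph `H` on a family `J`. -/
def Hgraph (v : ℕ) (J : Finset (ℤ × ℤ)) : SimpleGraph {p : ℤ × ℤ // p ∈ J} :=
  SimpleGraph.fromRel fun p q => SigOverlap v p.1 q.1

lemma meets_iff' (p q : ℤ × ℤ) : Meets p q ↔ max p.1 q.1 < min p.2 q.2 := by
  unfold Meets iv
  rw [Set.Ioo_inter_Ioo, Set.nonempty_Ioo]
  constructor <;> intro h <;> exact_mod_cast h

/-- Let `(P, Q)` be a good 2-partition of a vertebrate family `J`, let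
`0 ≤ l < r ≤ m` be such that every backbone unit interval contained in `(l, r)`
belongs to `P`, and let `I ∈ Q` with `I ⊆ (l, r)` of length at most `v`.
Then `(P ∪ {I}, Q ∖ {I})` is again a good 2-partition of `J`. -/
theorem move_short_interval_keeps_good
    (v : ℕ) (hv : 1 ≤ v) (m : ℤ) (hm : 1 ≤ m)
    (J : Finset (ℤ × ℤ)) (hJ : Vertebrate m J)
    (P Q : Finset (ℤ × ℤ)) (hPQ : GoodPartition v P Q J)
    (l r : ℤ) (hl : 0 ≤ l) (hlr : l < r) (hr : r ≤ m)
    (hunits : ∀ i : ℤ, l < i → i ≤ r → ((i - 1, i) : ℤ × ℤ) ∈ P)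
    (I : ℤ × ℤ) (hIQ : I ∈ Q) (hsub : iv I ⊆ Set.Ioo (l : ℝ) (r : ℝ))
    (hlen : I.2 - I.1 ≤ (v : ℤ)) :
    GoodPartition v (insert I P) (Q.erase I) J := by
  obtain ⟨⟨hunion, hdisj⟩, hPP, hQQ⟩ := hPQ
  have hIJ : I ∈ J := by rw [← hunion]; exact Finset.mem_union_right _ hIQ
  obtain ⟨hI0, hIlt, hIm⟩ := hJ.1 I hIJ
  have hIP : I ∉ P := fun h => Finset.disjoint_left.1 hdisj h hIQ
  have hsubI := (Set.Ioo_subset_Ioo_iff (by exact_mod_cast hIlt :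
    (I.1 : ℝ) < (I.2 : ℝ))).1 hsub
  have hlI : l ≤ I.1 := by exact_mod_cast hsubI.1
  have hIr : I.2 ≤ r := by exact_mod_cast hsubI.2
  refine ⟨⟨?_, ?_⟩, ?_, ?_⟩
  · -- union
    ext x
    rw [← hunion]
    by_cases hx : x = I <;>
      simp [hx, hIQ, Finset.mem_union, Finset.mem_insert, Finset.mem_erase] <;> tauto
  · -- disjoint
    rw [Finset.disjoint_left]
    intro x hx hx'
    rcases Finset.mem_insert.1 hx with rfl | hxP
    · exact (Finset.mem_erase.1 hx').1 rfl
    · exact Finset.disjoint_left.1 hdisj hxP (Finset.mem_of_mem_erase hx')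
  · -- Bar v (insert I P) (insert I P)
    intro p hp T hT hTpair hTmeets
    rcases Finset.mem_insert.1 hp with rfl | hpP
    · -- p = I : pairwise disjoint intervals meeting I inject into Ico I.1 I.2
      have hcard : T.card ≤ (Finset.Ico p.1 p.2).card := by
        apply Finset.card_le_card_of_injOn (fun q => max p.1 q.1)
        · intro q hq
          have h2 := hTmeets q hq
          rw [meets_iff'] at h2
          exact Finset.mem_Ico.2 ⟨le_max_left _ _, by
            show max p.1 q.1 < p.2; exact lt_of_lt_of_le h2 (min_le_left _ _)⟩
        · intro q hq q' hq' heq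
          by_contra hne
          have hd : ¬ Meets q q' := hTpair hq hq' hne
          have h1 := (hTmeets q hq); have h2 := (hTmeets q' hq')
          rw [meets_iff'] at hd h1 h2
          simp only at heq
          omega
      have : (Finset.Ico p.1 p.2).card = (p.2 - p.1).toNat := Int.card_Ico _ _
      omega
    · -- p ∈ P
      by_cases hIT : I ∈ T
      · -- replace I by a backbone unit interval inside I ∩ p
        have hmp : max p.1 I.1 < min p.2 I.2 := (meets_iff' p I).1 (hTmeets I hIT)
        set e : ℤ := max I.1 p.1 with he
        have hU : ((e, e + 1) : ℤ × ℤ) ∈ P := by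
          have := hunits (e + 1) (by omega) (by omega)
          simpa using this
        by_cases hUp : ((e, e + 1) : ℤ × ℤ) = p
        · -- then p ⊆ iv I, so T = {I}
          have hTsingle : T ⊆ {I} := by
            intro q hq
            rw [Finset.mem_singleton]
            by_contra hqI
            have hd : ¬ Meets q I := hTpair hq hIT hqI
            have h2 := hTmeets q hq
            rw [Prod.ext_iff] at hUp
            rw [meets_iff'] at hd h2
            simp only at hUp
            omega
          have := Finset.card_le_card hTsingle
          simp only [Finset.card_singleton] at this
          omega
        · -- proper replacement
          set U : ℤ × ℤ := ((e, e + 1) : ℤ × ℤ) with hUdef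
          have hUI : U ≠ I := fun h => hIP (h ▸ hU)
          have hUnotT : U ∉ T := by
            intro hUT
            have hd : ¬ Meets U I := hTpair hUT hIT hUI
            rw [meets_iff'] at hd
            simp only [hUdef] at hd
            omega
          have hsub' : insert U (T.erase I) ⊆ P.erase p := by
            intro q hq
            rcases Finset.mem_insert.1 hq with rfl | hq'
            · exact Finset.mem_erase.2 ⟨hUp, hU⟩
            · obtain ⟨hqI, hqT⟩ := Finset.mem_erase.1 hq'
              have := hT hqT
              rw [Finset.mem_erase, Finset.mem_insert] at this
              exact Finset.mem_erase.2 ⟨this.1, this.2.resolve_left hqI⟩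
          have hpair' : ((insert U (T.erase I) : Finset (ℤ × ℤ)) : Set (ℤ × ℤ)).Pairwise
              fun a b => ¬ Meets a b := by
            rw [Finset.coe_insert]
            refine Set.pairwise_insert.2 ⟨?_, ?_⟩
            · exact hTpair.mono (by exact_mod_cast Finset.erase_subset _ _)
            · intro q hq hne
              obtain ⟨hqI, hqT⟩ := Finset.mem_erase.1 (Finset.mem_coe.1 hq)
              have hd : ¬ Meets q I := hTpair hqT hIT hqI
              rw [meets_iff'] at hd
              constructor <;> rw [meets_iff'] <;> simp only [hUdef] <;> omega
          have hmeet' : ∀ q ∈ insert U (T.erase I), Meets p q := by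
            intro q hq
            rcases Finset.mem_insert.1 hq with rfl | hq'
            · rw [meets_iff']; simp only [hUdef]; omega
            · exact hTmeets q (Finset.mem_of_mem_erase hq')
          have hbar := hPP p hpP _ hsub' hpair' hmeet'
          have h1 : (insert U (T.erase I)).card = (T.erase I).card + 1 :=
            Finset.card_insert_of_notMem (fun h => hUnotT (Finset.mem_of_mem_erase h))
          have h2 : (T.erase I).card = T.card - 1 := Finset.card_erase_of_mem hIT
          have h3 : 1 ≤ T.card := Finset.card_pos.2 ⟨I, hIT⟩
          omega
      · -- I ∉ T : use Bar v P P directly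
        refine hPP p hpP T ?_ hTpair hTmeets
        intro q hq
        have := hT hq
        rw [Finset.mem_erase, Finset.mem_insert] at this
        exact Finset.mem_erase.2 ⟨this.1, this.2.resolve_left (fun h => hIT (h ▸ hq))⟩
  · -- Bar v (Q.erase I) (Q.erase I)
    intro p hp T hT hTpair hTmeets
    refine hQQ p (Finset.mem_of_mem_erase hp) T ?_ hTpair hTmeets
    exact hT.trans (Finset.erase_subset_erase _ (Finset.erase_subset _ _))
end

section
/- If two intervals A, B of a vertebrate family 𝒥 overlap significantly (their intersection is an interval of length at least 2v+1), then in every good 2-partition of 𝒥 the intervals A and B lie in the same part; consequently, every good 2-partition of 𝒥 is group-conforming. -/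
/-- Auxiliary: a long interval in `R` (with `Bar v R R`) cannot meet `v+1` unit
intervals of `R` inside itself. -/
lemma key_contra (v : ℕ) (R : Finset (ℤ × ℤ)) (hbar : Bar v R R) (X : ℤ × ℤ)
    (hX : X ∈ R) (l r : ℤ) (hl : X.1 ≤ l) (hr : r ≤ X.2) (hlen : 1 < X.2 - X.1)
    (S : Finset ℤ) (hS : S ⊆ Finset.Icc (l + 1) r) (hcard : v + 1 ≤ S.card)
    (hmem : ∀ i ∈ S, ((i - 1, i) : ℤ × ℤ) ∈ R) : False := by
  set f : ℤ → ℤ × ℤ := fun i => (i - 1, i) with hf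
  have hinj : Set.InjOn f (S : Set ℤ) := by
    intro a _ b _ h
    have := congrArg Prod.snd h
    simpa [hf] using this
  set T := S.image f with hT
  have hcardT : T.card = S.card := Finset.card_image_of_injOn hinj
  have hTsub : T ⊆ R.erase X := by
    intro p hp
    rw [hT, Finset.mem_image] at hp
    obtain ⟨i, hi, rfl⟩ := hp
    refine Finset.mem_erase.mpr ⟨?_, hmem i hi⟩
    intro h
    rw [← h] at hlen
    simp [hf] at hlen
  have hpw : (T : Set (ℤ × ℤ)).Pairwise fun a b => ¬ Meets a b := by
    intro a ha b hb hab
    simp only [hT, Finset.coe_image, Set.mem_image, Finset.mem_coe] at ha hb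
    obtain ⟨i, hi, rfl⟩ := ha
    obtain ⟨j, hj, rfl⟩ := hb
    have hij : i ≠ j := by intro h; exact hab (by rw [h])
    rintro ⟨x, ⟨hx1, hx2⟩, ⟨hx3, hx4⟩⟩
    simp only [hf] at hx1 hx2 hx3 hx4
    push_cast at hx1 hx2 hx3 hx4
    rcases lt_or_gt_of_ne hij with h | h
    · have : (i : ℝ) ≤ (j : ℝ) - 1 := by exact_mod_cast (by omega : i ≤ j - 1)
      linarith
    · have : (j : ℝ) ≤ (i : ℝ) - 1 := by exact_mod_cast (by omega : j ≤ i - 1)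
      linarith
  have hmeets : ∀ q ∈ T, Meets X q := by
    intro q hq
    rw [hT, Finset.mem_image] at hq
    obtain ⟨i, hi, rfl⟩ := hq
    have hii := hS hi
    rw [Finset.mem_Icc] at hii
    refine ⟨(i : ℝ) - 1 / 2, ⟨?_, ?_⟩, ⟨?_, ?_⟩⟩
    · have : (X.1 : ℝ) ≤ (i : ℝ) - 1 := by exact_mod_cast (by omega : X.1 ≤ i - 1)
      linarith
    · have : (i : ℝ) ≤ (X.2 : ℝ) := by exact_mod_cast (by omega : i ≤ X.2)
      linarith
    · simp only [hf]; push_cast; linarith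
    · simp only [hf]; push_cast; linarith
  have := hbar X hX T hTsub hpw hmeets
  omega

/-- Significantly overlapping intervals of a vertebrate family lie in the same
part of any good 2-partition. -/
lemma sig_same_part (v : ℕ) (hv : 1 ≤ v) (m : ℤ) (J : Finset (ℤ × ℤ)) (hJ : Vertebrate m J)
    (A B : ℤ × ℤ) (hA : A ∈ J) (hB : B ∈ J) (hover : SigOverlap v A B)
    (P Q : Finset (ℤ × ℤ)) (hPQ : GoodPartition v P Q J) :
    (A ∈ P ↔ B ∈ P) := by
  obtain ⟨⟨hunion, hdisj⟩, hbP, hbQ⟩ := hPQ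
  set l := max A.1 B.1 with hle
  set r := min A.2 B.2 with hre
  have hlr : 2 * (v : ℤ) + 1 ≤ r - l := hover
  have hA0 := hJ.1 A hA
  have hB0 := hJ.1 B hB
  have hl0 : 0 ≤ l := le_trans hA0.1 (le_max_left _ _)
  have hrm : r ≤ m := le_trans (min_le_left _ _) hA0.2.2
  have hlA : A.1 ≤ l := le_max_left _ _
  have hlB : B.1 ≤ l := le_max_right _ _
  have hrA : r ≤ A.2 := min_le_left _ _
  have hrB : r ≤ B.2 := min_le_right _ _
  clear_value l r
  have hv0 : (0 : ℤ) ≤ (v : ℤ) := Int.ofNat_nonneg v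
  have hlenA : 1 < A.2 - A.1 := by omega
  have hlenB : 1 < B.2 - B.1 := by omega
  set I := Finset.Icc (l + 1) r with hI
  have hIJ : ∀ i ∈ I, ((i - 1, i) : ℤ × ℤ) ∈ J := by
    intro i hi
    rw [hI, Finset.mem_Icc] at hi
    exact hJ.2 i (by omega) (by omega)
  have hIcard : I.card = (r - l).toNat := by
    rw [hI, Int.card_Icc]; congr 1; omega
  classical
  set IP := I.filter (fun i => ((i - 1, i) : ℤ × ℤ) ∈ P) with hIP
  set IQ := I.filter (fun i => ¬ ((i - 1, i) : ℤ × ℤ) ∈ P) with hIQ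
  have hsplit : IP.card + IQ.card = I.card :=
    Finset.card_filter_add_card_filter_not _
  have hIQQ : ∀ i ∈ IQ, ((i - 1, i) : ℤ × ℤ) ∈ Q := by
    intro i hi
    rw [hIQ, Finset.mem_filter] at hi
    have := hIJ i hi.1
    rw [← hunion, Finset.mem_union] at this
    tauto
  have hIPsub : IP ⊆ Finset.Icc (l + 1) r := Finset.filter_subset _ _
  have hIQsub : IQ ⊆ Finset.Icc (l + 1) r := Finset.filter_subset _ _
  have hcase : v + 1 ≤ IP.card ∨ v + 1 ≤ IQ.card := by omega
  rcases hcase with hc | hc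
  · -- many unit intervals in P: both A and B are outside P
    have hAP : A ∉ P := fun hAp =>
      key_contra v P hbP A hAp l r hlA hrA hlenA IP hIPsub hc
        (fun i hi => (Finset.mem_filter.mp hi).2)
    have hBP : B ∉ P := fun hBp =>
      key_contra v P hbP B hBp l r hlB hrB hlenB IP hIPsub hc
        (fun i hi => (Finset.mem_filter.mp hi).2)
    simp [hAP, hBP]
  · -- many unit intervals in Q: both A and B are outside Q, hence in P
    have hAQ : A ∉ Q := fun hAq =>
      key_contra v Q hbQ A hAq l r hlA hrA hlenA IQ hIQsub hc hIQQ
    have hBQ : B ∉ Q := fun hBq =>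
      key_contra v Q hbQ B hBq l r hlB hrB hlenB IQ hIQsub hc hIQQ
    have hAP : A ∈ P := by
      have := hA; rw [← hunion, Finset.mem_union] at this; tauto
    have hBP : B ∈ P := by
      have := hB; rw [← hunion, Finset.mem_union] at this; tauto
    simp [hAP, hBP]

/-- If two intervals `A, B` of a vertebrate family `J` overlap significantly, then
in every good 2-partition of `J` they lie in the same part; consequently, every
good 2-partition of `J` is group-conforming (constant on connected components of
the significant-overlap graph `H`). -/
theorem good_partition_group_conforming
    (v : ℕ) (hv : 1 ≤ v) (m : ℤ) (hm : 1 ≤ m)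
    (J : Finset (ℤ × ℤ)) (hJ : Vertebrate m J)
    (A B : ℤ × ℤ) (hA : A ∈ J) (hB : B ∈ J) (hover : SigOverlap v A B)
    (P Q : Finset (ℤ × ℤ)) (hPQ : GoodPartition v P Q J) :
    (A ∈ P ↔ B ∈ P) ∧
    ∀ a b : {p : ℤ × ℤ // p ∈ J}, (Hgraph v J).Reachable a b →
      (a.1 ∈ P ↔ b.1 ∈ P) := by
  refine ⟨sig_same_part v hv m J hJ A B hA hB hover P Q hPQ, ?_⟩
  intro a b hreach
  obtain ⟨w⟩ := hreach
  induction w with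
  | nil => rfl
  | cons h p ih =>
    rename_i x y z
    simp only [Hgraph, SimpleGraph.fromRel_adj] at h
    have hso : SigOverlap v x.1 y.1 := by
      rcases h.2 with h1 | h1
      · exact h1
      · unfold SigOverlap at h1 ⊢
        rw [min_comm, max_comm]
        exact h1
    exact (sig_same_part v hv m J hJ x.1 y.1 x.2 y.2 hso P Q hPQ).trans ih
end

section
/- For any integer point x, the intervals of a vertebrate family 𝒥 that contain x belong to at most 2v² + v distinct groups, where the groups are the connected components of the significant-overlap graph H on 𝒥. -/
namespace PFGaux

def tri : ℕ → ℕ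
  | 0 => 0
  | n + 1 => tri n + n + 1

lemma tri_succ (n : ℕ) : tri (n + 1) = tri n + n + 1 := rfl

lemma tri_mono : Monotone tri :=
  monotone_nat_of_le_succ fun n => by rw [tri_succ]; omega

lemma two_mul_tri (n : ℕ) : 2 * tri n = n * (n + 1) := by
  induction n with
  | zero => rfl
  | succ k ih => rw [tri_succ]; ring_nf; ring_nf at ih; linarith

lemma tri_two_v (v : ℕ) : tri (2 * v) = 2 * v ^ 2 + v := by
  refine Nat.eq_of_mul_eq_mul_left (by norm_num : 0 < 2) ?_
  rw [two_mul_tri]; ring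

/-- starting points of blocks are separated -/
lemma code_block_lt {s t l : ℕ} (hl : 1 ≤ l) (hls : l < s) (hst : s < t) :
    tri (s - 2) + (l - 1) < tri (t - 2) := by
  have h := tri_succ (s - 2)
  have e0 : s - 2 + 1 = s - 1 := by omega
  rw [e0] at h
  have e2 : tri (s - 1) ≤ tri (t - 2) := tri_mono (by omega)
  omega

/-- The label code of an interval `p` containing integer point `x`. -/
def codeF (v : ℕ) (x : ℤ) (p : ℤ × ℤ) : ℕ :=
  if min (x - p.1).toNat (2 * v) + min (p.2 - x).toNat (2 * v) ≤ 2 * v then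
    tri (min (x - p.1).toNat (2 * v) + min (p.2 - x).toNat (2 * v) - 2) +
      (min (x - p.1).toNat (2 * v) - 1)
  else tri (2 * v - 1) + (min (x - p.1).toNat (2 * v) - 1)

lemma codeF_lt (v : ℕ) (hv : 1 ≤ v) (x : ℤ) (p : ℤ × ℤ)
    (h1 : p.1 < x) (h2 : x < p.2) : codeF v x p < 2 * v ^ 2 + v := by
  rw [← tri_two_v v]
  unfold codeF
  set l := min (x - p.1).toNat (2 * v) with hldef
  set r := min (p.2 - x).toNat (2 * v) with hrdef
  have hl : 1 ≤ l ∧ l ≤ 2 * v := by constructor <;> omega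
  have hr : 1 ≤ r ∧ r ≤ 2 * v := by constructor <;> omega
  have e1 : tri (2 * v) = tri (2 * v - 1) + (2 * v - 1) + 1 := by
    have h := tri_succ (2 * v - 1)
    have e0 : 2 * v - 1 + 1 = 2 * v := by omega
    rw [e0] at h; omega
  split_ifs with hs
  · have hb := code_block_lt (s := l + r) (t := 2 * v + 1) hl.1 (by omega) (by omega)
    have e2 : 2 * v + 1 - 2 = 2 * v - 1 := by omega
    rw [e2] at hb
    omega
  · omega

lemma codeF_inj (v : ℕ) (hv : 1 ≤ v) (x : ℤ) (p q : ℤ × ℤ)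
    (hp1 : p.1 < x) (hp2 : x < p.2) (hq1 : q.1 < x) (hq2 : x < q.2)
    (h : codeF v x p = codeF v x q) : p = q ∨ SigOverlap v p q := by
  unfold codeF at h
  set lp := min (x - p.1).toNat (2 * v) with hlp
  set rp := min (p.2 - x).toNat (2 * v) with hrp
  set lq := min (x - q.1).toNat (2 * v) with hlq
  set rq := min (q.2 - x).toNat (2 * v) with hrq
  have hbp : 1 ≤ lp ∧ lp ≤ 2 * v ∧ 1 ≤ rp ∧ rp ≤ 2 * v := by
    refine ⟨?_, ?_, ?_, ?_⟩ <;> omega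
  have hbq : 1 ≤ lq ∧ lq ≤ 2 * v ∧ 1 ≤ rq ∧ rq ≤ 2 * v := by
    refine ⟨?_, ?_, ?_, ?_⟩ <;> omega
  by_cases hsp : lp + rp ≤ 2 * v <;> by_cases hsq : lq + rq ≤ 2 * v
  · -- both small: p = q
    rw [if_pos hsp, if_pos hsq] at h
    left
    have hsum : lp + rp = lq + rq := by
      by_contra hne
      rcases Nat.lt_or_ge (lp + rp) (lq + rq) with hlt | hge
      · have := code_block_lt (s := lp + rp) (t := lq + rq) hbp.1 (by omega) hlt
        omega
      · have := code_block_lt (s := lq + rq) (t := lp + rp) hbq.1 (by omega) (by omega)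
        omega
    have htri : tri (lp + rp - 2) = tri (lq + rq - 2) := by rw [hsum]
    have h1 : p.1 = q.1 := by omega
    have h2 : p.2 = q.2 := by omega
    exact Prod.ext h1 h2
  · -- small / big: impossible
    rw [if_pos hsp, if_neg hsq] at h
    exfalso
    have := code_block_lt (s := lp + rp) (t := 2 * v + 1) hbp.1 (by omega) (by omega)
    have e2 : 2 * v + 1 - 2 = 2 * v - 1 := by omega
    rw [e2] at this
    omega
  · -- big / small: impossible
    rw [if_neg hsp, if_pos hsq] at h
    exfalso
    have := code_block_lt (s := lq + rq) (t := 2 * v + 1) hbq.1 (by omega) (by omega)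
    have e2 : 2 * v + 1 - 2 = 2 * v - 1 := by omega
    rw [e2] at this
    omega
  · -- both big: significant overlap
    rw [if_neg hsp, if_neg hsq] at h
    right
    show (2 * (v : ℤ) + 1) ≤ min p.2 q.2 - max p.1 q.1
    omega

end PFGaux

/-- Any integer point `x` is contained in intervals of a vertebrate family `J`
from at most `2v² + v` groups, the groups being the connected components of the
significant-overlap graph `H` on `J`. -/
theorem point_in_few_groups
    (v : ℕ) (hv : 1 ≤ v) (m : ℤ) (hm : 1 ≤ m)
    (J : Finset (ℤ × ℤ)) (hJ : Vertebrate m J) (x : ℤ) :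
    Set.ncard {c : (Hgraph v J).ConnectedComponent |
        ∃ p : {p : ℤ × ℤ // p ∈ J},
          (Hgraph v J).connectedComponentMk p = c ∧ (x : ℝ) ∈ iv p.1} ≤
      2 * v ^ 2 + v := by
  classical
  set g : (Hgraph v J).ConnectedComponent → ℕ := fun c =>
    if h : ∃ p : {p : ℤ × ℤ // p ∈ J},
        (Hgraph v J).connectedComponentMk p = c ∧ (x : ℝ) ∈ iv p.1
    then PFGaux.codeF v x h.choose.1 else 0 with hg
  have key : ∀ (c : (Hgraph v J).ConnectedComponent)
      (h : ∃ p : {p : ℤ × ℤ // p ∈ J},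
        (Hgraph v J).connectedComponentMk p = c ∧ (x : ℝ) ∈ iv p.1),
      h.choose.1.1 < x ∧ x < h.choose.1.2 := by
    intro c h
    obtain ⟨-, hx⟩ := h.choose_spec
    obtain ⟨hx1, hx2⟩ := hx
    exact ⟨by exact_mod_cast hx1, by exact_mod_cast hx2⟩
  have hle : Set.ncard {c : (Hgraph v J).ConnectedComponent |
        ∃ p : {p : ℤ × ℤ // p ∈ J},
          (Hgraph v J).connectedComponentMk p = c ∧ (x : ℝ) ∈ iv p.1} ≤
      ((Finset.range (2 * v ^ 2 + v) : Finset ℕ) : Set ℕ).ncard := by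
    apply Set.ncard_le_ncard_of_injOn g
    · intro c hc
      have hc' : ∃ p : {p : ℤ × ℤ // p ∈ J},
          (Hgraph v J).connectedComponentMk p = c ∧ (x : ℝ) ∈ iv p.1 := hc
      simp only [hg, dif_pos hc', Finset.coe_range, Set.mem_Iio]
      exact PFGaux.codeF_lt v hv x _ (key c hc').1 (key c hc').2
    · intro c1 h1 c2 h2 heq
      have h1' : ∃ p : {p : ℤ × ℤ // p ∈ J},
          (Hgraph v J).connectedComponentMk p = c1 ∧ (x : ℝ) ∈ iv p.1 := h1
      have h2' : ∃ p : {p : ℤ × ℤ // p ∈ J},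
          (Hgraph v J).connectedComponentMk p = c2 ∧ (x : ℝ) ∈ iv p.1 := h2
      simp only [hg, dif_pos h1', dif_pos h2'] at heq
      obtain ⟨hm1, -⟩ := h1'.choose_spec
      obtain ⟨hm2, -⟩ := h2'.choose_spec
      have k1 := key c1 h1'
      have k2 := key c2 h2'
      rcases PFGaux.codeF_inj v hv x _ _ k1.1 k1.2 k2.1 k2.2 heq with he | hso
      · rw [← hm1, ← hm2]
        congr 1
        exact Subtype.ext he
      · rw [← hm1, ← hm2]
        by_cases hpq : h1'.choose = h2'.choose
        · rw [hpq]
        · apply SimpleGraph.ConnectedComponent.sound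
          apply SimpleGraph.Adj.reachable
          show (SimpleGraph.fromRel fun p q : {p : ℤ × ℤ // p ∈ J} =>
            SigOverlap v p.1 q.1).Adj _ _
          rw [SimpleGraph.fromRel_adj]
          exact ⟨hpq, Or.inl hso⟩
  rw [Set.ncard_coe_finset, Finset.card_range] at hle
  exact hle
end
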